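/- arXiv:1802.05791 — 5 statements merged into one kernel-verified Lean document; each statement's English description precedes it below -/
import Mathlib

section
/- If F is a (1+ε)-sum approximation of f and G is a (1+ε)-sum approximation of g, then the convolution F ∗ G is a (1+ε)²-sum approximation of f ∗ g (for ε > 0). -/
/-- Prefix sum: `psum f x = ∑_{y ≤ x} f y`. -/
def psum (f : ℕ → ℕ) (x : ℕ) : ℕ := ∑ y ∈ Finset.range (x + 1), f y

/-- `F` is a `(1+ε)`-sum approximation of `f`:
`Σf(x) ≤ ΣF(x) ≤ (1+ε)·Σf(x)` for all `x`. -/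
def IsSumApprox (ε : ℝ) (F f : ℕ → ℕ) : Prop :=
  ∀ x, (psum f x : ℝ) ≤ psum F x ∧ (psum F x : ℝ) ≤ (1 + ε) * psum f x

/-- Convolution: `(f ∗ g)(w) = ∑_{x+y=w} f(x)·g(y)`. -/
def conv (f g : ℕ → ℕ) (w : ℕ) : ℕ := ∑ x ∈ Finset.range (w + 1), f x * g (w - x)

/-!
Summing `f ∗ g` up to `x` gives `Σ(f ∗ g)(x) = ∑_{a ≤ x} f(a) · Σg(x - a)`, which is
monotone in `Σg` with nonnegative weights `f(a)`. Hence replacing `g` by `G` keeps `f ∗ G` a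
`(1+ε)`-sum approximation of `f ∗ g`; by commutativity the same holds for replacing `f` by `F`,
and the two factors `1 + ε` multiply.
-/

open Finset

theorem conv_comm (f g : ℕ → ℕ) : conv f g = conv g f := by
  funext w
  rw [conv, ← sum_range_reflect]
  refine sum_congr rfl fun a ha => ?_
  rw [mem_range] at ha
  rw [show w + 1 - 1 - a = w - a by omega, show w - (w - a) = a by omega, Nat.mul_comm]

theorem psum_conv (f g : ℕ → ℕ) (x : ℕ) :
    psum (conv f g) x = ∑ a ∈ range (x + 1), f a * psum g (x - a) := by
  simp only [psum, conv, mul_sum, range_eq_Ico]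
  rw [← sum_Ico_Ico_comm 0 (x + 1) fun a w => f a * g (w - a)]
  refine sum_congr rfl fun a ha => ?_
  rw [mem_Ico] at ha
  rw [sum_Ico_eq_sum_range, show x + 1 - a = x - a + 1 by omega, ← range_eq_Ico]
  simp only [Nat.add_sub_cancel_left]

theorem psum_conv_le_mul {h H : ℕ → ℕ} {C : ℝ} (hle : ∀ n, (psum h n : ℝ) ≤ C * psum H n)
    (c : ℕ → ℕ) (x : ℕ) : (psum (conv c h) x : ℝ) ≤ C * psum (conv c H) x := by
  simp only [psum_conv, Nat.cast_sum, Nat.cast_mul, mul_sum]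
  exact sum_le_sum fun a _ => by
    rw [mul_left_comm]
    exact mul_le_mul_of_nonneg_left (hle _) (Nat.cast_nonneg _)

namespace IsSumApprox

variable {ε δ : ℝ} {F f G g : ℕ → ℕ}

theorem conv_left (hG : IsSumApprox ε G g) (f : ℕ → ℕ) :
    IsSumApprox ε (conv f G) (conv f g) := fun x =>
  ⟨by simpa using psum_conv_le_mul (C := 1) (fun n => by simpa using (hG n).1) f x,
    psum_conv_le_mul (fun n => (hG n).2) f x⟩

theorem conv_right (hF : IsSumApprox ε F f) (g : ℕ → ℕ) :
    IsSumApprox ε (conv F g) (conv f g) := by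
  simpa only [conv_comm _ g] using hF.conv_left g

theorem trans (hFG : IsSumApprox ε F G) (hGg : IsSumApprox δ G g) (hε : 0 ≤ 1 + ε) :
    IsSumApprox ((1 + ε) * (1 + δ) - 1) F g := fun x =>
  ⟨(hGg x).1.trans (hFG x).1, by
    calc (psum F x : ℝ) ≤ (1 + ε) * psum G x := (hFG x).2
      _ ≤ (1 + ε) * ((1 + δ) * psum g x) := by gcongr; exact (hGg x).2
      _ = (1 + ((1 + ε) * (1 + δ) - 1)) * psum g x := by ring⟩

end IsSumApprox

theorem sum_approx_conv (f g F G : ℕ → ℕ) (ε : ℝ) (hε : 0 < ε)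
    (hF : IsSumApprox ε F f) (hG : IsSumApprox ε G g) :
    ∀ x, (psum (conv f g) x : ℝ) ≤ psum (conv F G) x ∧
      (psum (conv F G) x : ℝ) ≤ (1 + ε) ^ 2 * psum (conv f g) x := by
  have h := (hF.conv_right G).trans (hG.conv_left f) (by linarith)
  rw [show (1 + ε) * (1 + ε) - 1 = (1 + ε) ^ 2 - 1 by ring] at h
  simpa only [IsSumApprox, add_sub_cancel] using h
end

section
/- Let ε > 0 and let f, g : ℕ → ℕ and F, G : ℕ → ℕ satisfy ΣF(x) ≤ (1+ε)·Σf(x) and ΣG(x) ≤ (1+ε)·Σg(x) for all x. Then for every w, Σ(F ∗ G)(w) ≤ (1+ε)²·Σ(f ∗ g)(w). -/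
open Finset

theorem conv_eq_sum_antidiagonal (f g : ℕ → ℕ) (w : ℕ) :
    conv f g w = ∑ p ∈ antidiagonal w, f p.1 * g p.2 :=
  (Nat.sum_antidiagonal_eq_sum_range_succ (fun x y => f x * g y) w).symm

theorem psum_zero (f : ℕ → ℕ) : psum f 0 = f 0 := by
  simp [psum]

theorem psum_succ (f : ℕ → ℕ) (n : ℕ) : psum f (n + 1) = psum f n + f (n + 1) :=
  sum_range_succ f (n + 1)

theorem psum_conv_s5 (f g : ℕ → ℕ) : psum (conv f g) = conv f (psum g) := by
  ext w
  induction w with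
  | zero => simp [psum_zero, conv]
  | succ n ih =>
    simp only [psum_succ, ih, conv_eq_sum_antidiagonal, Nat.sum_antidiagonal_succ', psum_zero,
      mul_add, sum_add_distrib]
    ring

theorem cast_conv_le_mul_cast_conv {c : ℝ} (f : ℕ → ℕ) {g G : ℕ → ℕ}
    (hG : ∀ x, (G x : ℝ) ≤ c * g x) (w : ℕ) :
    (conv f G w : ℝ) ≤ c * conv f g w := by
  simp only [conv, Nat.cast_sum, Nat.cast_mul, mul_sum]
  refine sum_le_sum fun x _ => ?_
  calc (f x : ℝ) * G (w - x) ≤ f x * (c * g (w - x)) := by gcongr; exact hG _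
    _ = c * (f x * g (w - x)) := by ring

theorem psum_conv_upper (ε : ℝ) (hε : 0 < ε) (f g F G : ℕ → ℕ)
    (hF : ∀ x, (psum F x : ℝ) ≤ (1 + ε) * psum f x)
    (hG : ∀ x, (psum G x : ℝ) ≤ (1 + ε) * psum g x) :
    ∀ w, (psum (conv F G) w : ℝ) ≤ (1 + ε) ^ 2 * psum (conv f g) w := by
  intro w
  calc (psum (conv F G) w : ℝ) = conv F (psum G) w := by rw [psum_conv_s5]
    _ ≤ (1 + ε) * conv F (psum g) w := cast_conv_le_mul_cast_conv F hG w
    _ = (1 + ε) * conv g (psum F) w := by rw [← psum_conv_s5, conv_comm, psum_conv_s5]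
    _ ≤ (1 + ε) * ((1 + ε) * conv g (psum f) w) := by
        gcongr
        exact cast_conv_le_mul_cast_conv g hF w
    _ = (1 + ε) ^ 2 * psum (conv f g) w := by rw [conv_comm f, psum_conv_s5]; ring
end

section
/- Let f : ℕ → ℕ be finitely supported and δ > 0. Then the sparsified function f̃ is a (1+δ)-approximation of Σf, i.e., Σf(x) ≤ f̃(x) ≤ (1+δ)·Σf(x) for all x ∈ ℕ. -/
open Classical

/-- Threshold sequence: `r 0 = 0`, `r (i+1) = max (r i + 1) ⌊(1+δ)·r i⌋`. -/
noncomputable def rseq (δ : ℝ) : ℕ → ℕ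
  | 0 => 0
  | i + 1 => max (rseq δ i + 1) ⌊(1 + δ) * (rseq δ i : ℝ)⌋₊

/-- The set of breakpoints: for every index `i` such that some `x` has
`Σf(x) ≥ r_i`, the least such `x` is a breakpoint. -/
noncomputable def breakpoints (f : ℕ → ℕ) (δ : ℝ) : Set ℕ :=
  {b | ∃ i, (∃ x, rseq δ i ≤ psum f x) ∧ b = sInf {x | rseq δ i ≤ psum f x}}

/-- The sparsified function `f̃`: if some breakpoint lies strictly above `x`,
`f̃(x) = Σf(succ(x) - 1)` where `succ(x)` is the least breakpoint `> x`;
otherwise `f̃(x) = M`, the total sum of `f`. -/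
noncomputable def sparsified (f : ℕ →₀ ℕ) (δ : ℝ) (x : ℕ) : ℕ :=
  if (breakpoints f δ ∩ Set.Ioi x).Nonempty then
    psum f (sInf (breakpoints f δ ∩ Set.Ioi x) - 1)
  else ∑ y ∈ f.support, f y

/-!
Let `r_i ≤ Σf(x) < r_{i+1}`. Every value of `Σf` that is below `r_{i+1}` is at most
`(1+δ)·r_i ≤ (1+δ)·Σf(x)`, by the recursion for `r`. And `f̃(x) < r_{i+1}`: if the threshold
`r_{i+1}` is reached at all, its breakpoint lies above `x`, so `succ(x)` is at most that
breakpoint and `Σf(succ(x) - 1) < r_{i+1}`; if it is never reached, `M < r_{i+1}`.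
-/

lemma exists_le_and_lt_succ {a : ℕ → ℕ} {n : ℕ} (h0 : a 0 ≤ n) (hn : ∃ j, n < a j) :
    ∃ i, a i ≤ n ∧ n < a (i + 1) := by
  have hpos : 0 < Nat.find hn := Nat.pos_of_ne_zero fun h => by
    have := Nat.find_spec hn
    rw [h] at this
    omega
  refine ⟨Nat.find hn - 1, ?_, ?_⟩
  · exact not_lt.1 (Nat.find_min hn (by omega))
  · rw [Nat.sub_add_cancel hpos]
    exact Nat.find_spec hn

lemma psum_mono (f : ℕ → ℕ) : Monotone (psum f) := fun _ _ h =>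
  Finset.sum_le_sum_of_subset (Finset.range_subset_range.2 (by omega))

lemma lt_sInf_setOf_le_psum_iff {f : ℕ → ℕ} {r x : ℕ} (hr : ∃ z, r ≤ psum f z) :
    x < sInf {z | r ≤ psum f z} ↔ psum f x < r := by
  refine ⟨fun h => not_le.1 (Nat.notMem_of_lt_sInf h ·), fun h => not_le.1 fun hle => ?_⟩
  have hmem : r ≤ psum f (sInf {z | r ≤ psum f z}) := Nat.sInf_mem hr
  exact h.not_ge (hmem.trans (psum_mono f hle))

lemma psum_le_sum_support (f : ℕ →₀ ℕ) (x : ℕ) : psum f x ≤ ∑ y ∈ f.support, f y :=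
  Finset.sum_le_sum_of_ne_zero fun _ _ hy => Finsupp.mem_support_iff.2 hy

lemma exists_psum_eq_sum_support (f : ℕ →₀ ℕ) : ∃ X, psum f X = ∑ y ∈ f.support, f y := by
  refine ⟨f.support.sup id, (Finset.sum_subset (fun y hy => ?_) fun y _ hy => ?_).symm⟩
  · exact Finset.mem_range_succ_iff.2 (Finset.le_sup (f := id) hy)
  · exact Finsupp.notMem_support_iff.1 hy

lemma rseq_lt_succ (δ : ℝ) (i : ℕ) : rseq δ i < rseq δ (i + 1) :=
  Nat.lt_of_succ_le (le_max_left _ _)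

lemma rseq_strictMono (δ : ℝ) : StrictMono (rseq δ) :=
  strictMono_nat_of_lt_succ (rseq_lt_succ δ)

lemma exists_rseq_le_and_lt_succ (δ : ℝ) (n : ℕ) :
    ∃ i, rseq δ i ≤ n ∧ n < rseq δ (i + 1) :=
  exists_le_and_lt_succ (Nat.zero_le n)
    ⟨n + 1, Nat.lt_of_succ_le ((rseq_strictMono δ).id_le (n + 1))⟩

lemma le_one_add_mul_rseq_of_lt_rseq_succ {δ : ℝ} (hδ : 0 ≤ δ) {n i : ℕ}
    (h : n < rseq δ (i + 1)) : (n : ℝ) ≤ (1 + δ) * rseq δ i := by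
  rcases lt_max_iff.1 h with h | h
  · calc (n : ℝ) ≤ rseq δ i := by exact_mod_cast Nat.lt_succ_iff.1 h
      _ ≤ (1 + δ) * rseq δ i := le_mul_of_one_le_left (by positivity) (by linarith)
  · exact (Nat.cast_le.2 h.le).trans (Nat.floor_le (by positivity))

section sparsified

variable (f : ℕ →₀ ℕ) (δ : ℝ)

lemma sInf_mem_breakpoints_inter_Ioi {x j : ℕ} (hx : psum f x < rseq δ j)
    (hj : ∃ z, rseq δ j ≤ psum f z) :
    sInf {z | rseq δ j ≤ psum f z} ∈ breakpoints f δ ∩ Set.Ioi x :=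
  ⟨⟨j, hj, rfl⟩, (lt_sInf_setOf_le_psum_iff hj).2 hx⟩

lemma psum_le_sparsified (x : ℕ) : psum f x ≤ sparsified f δ x := by
  unfold sparsified
  split_ifs with h
  · exact psum_mono f (Nat.le_sub_one_of_lt (Nat.sInf_mem h).2)
  · exact psum_le_sum_support f x

lemma sparsified_lt_rseq {x j : ℕ} (hx : psum f x < rseq δ j) :
    sparsified f δ x < rseq δ j := by
  unfold sparsified
  split_ifs with h
  · refine not_le.1 fun hle => ?_
    have hj : ∃ z, rseq δ j ≤ psum f z := ⟨_, hle⟩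
    have hsucc_le : sInf (breakpoints f δ ∩ Set.Ioi x) ≤ sInf {z | rseq δ j ≤ psum f z} :=
      Nat.sInf_le (sInf_mem_breakpoints_inter_Ioi f δ hx hj)
    have hle_pred : sInf {z | rseq δ j ≤ psum f z} ≤ sInf (breakpoints f δ ∩ Set.Ioi x) - 1 :=
      Nat.sInf_le hle
    have hx_lt_succ : x < sInf (breakpoints f δ ∩ Set.Ioi x) := (Nat.sInf_mem h).2
    omega
  · refine not_le.1 fun hle => h ?_
    obtain ⟨X, hX⟩ := exists_psum_eq_sum_support f
    exact ⟨_, sInf_mem_breakpoints_inter_Ioi f δ hx ⟨X, hX ▸ hle⟩⟩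

end sparsified

theorem sparsified_approx (f : ℕ →₀ ℕ) (δ : ℝ) (hδ : 0 < δ) :
    ∀ x, psum f x ≤ sparsified f δ x ∧
      (sparsified f δ x : ℝ) ≤ (1 + δ) * psum f x := by
  intro x
  obtain ⟨i, hri, hlt⟩ := exists_rseq_le_and_lt_succ δ (psum f x)
  refine ⟨psum_le_sparsified f δ x, ?_⟩
  calc (sparsified f δ x : ℝ)
      ≤ (1 + δ) * rseq δ i :=
        le_one_add_mul_rseq_of_lt_rseq_succ hδ.le (sparsified_lt_rseq f δ hlt)
    _ ≤ (1 + δ) * psum f x := by gcongr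
end

section
/- Let S be a finite index set with weights w : S → ℕ, let a ∉ S, and let α > 0. If F is a (1+α)-sum approximation of k_S, then F + (F ▷ w(a)) is a (1+α)-sum approximation of k_{S ∪ {a}}. -/
/-- Shift of `f` by `w`: `(f▷w)(x) = f(x-w)` if `x ≥ w`, else `0`. -/
def shiftF (f : ℕ → ℕ) (w : ℕ) (x : ℕ) : ℕ := if w ≤ x then f (x - w) else 0

/-- Knapsack counting function: `knap S w x` is the number of subsets
`T ⊆ S` with total weight `∑_{i∈T} w i = x`. -/
def knap {ι : Type*} [DecidableEq ι] (S : Finset ι) (w : ι → ℕ) (x : ℕ) : ℕ :=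
  (S.powerset.filter (fun T => ∑ i ∈ T, w i = x)).card

/-!
Splitting the subsets of `S ∪ {a}` according to whether they contain `a` gives
`k_{S ∪ {a}} = k_S + k_S ▷ w(a)`. Both operations on the right preserve sum approximations:
prefix sums are additive, and the prefix sum of a shift is the shifted prefix sum.
-/

open Finset

lemma psum_add (f g : ℕ → ℕ) (x : ℕ) :
    psum (fun y => f y + g y) x = psum f x + psum g x :=
  sum_add_distrib

lemma psum_shiftF (f : ℕ → ℕ) (c x : ℕ) :
    psum (shiftF f c) x = if c ≤ x then psum f (x - c) else 0 := by
  unfold psum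
  split_ifs with hcx
  · rw [← sum_range_add_sum_Ico _ (by omega : c ≤ x + 1), sum_Ico_eq_sum_range,
      sum_eq_zero fun y hy => by simp_all [shiftF], zero_add,
      show x + 1 - c = x - c + 1 by omega]
    exact sum_congr rfl fun y _ => by simp [shiftF]
  · exact sum_eq_zero fun y hy => by simp [shiftF] at hy ⊢; omega

lemma IsSumApprox.add {ε : ℝ} {F f G g : ℕ → ℕ} (hF : IsSumApprox ε F f)
    (hG : IsSumApprox ε G g) :
    IsSumApprox ε (fun x => F x + G x) (fun x => f x + g x) := by
  intro x
  obtain ⟨hF₁, hF₂⟩ := hF x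
  obtain ⟨hG₁, hG₂⟩ := hG x
  simp only [psum_add, Nat.cast_add]
  constructor <;> linarith

lemma IsSumApprox.shiftF {ε : ℝ} {F f : ℕ → ℕ} (hF : IsSumApprox ε F f) (c : ℕ) :
    IsSumApprox ε (shiftF F c) (shiftF f c) := by
  intro x
  rw [psum_shiftF, psum_shiftF]
  split_ifs
  · exact hF (x - c)
  · simp

lemma knap_eq_sum_ite {ι : Type*} [DecidableEq ι] (S : Finset ι) (w : ι → ℕ) (x : ℕ) :
    knap S w x = ∑ T ∈ S.powerset, if ∑ i ∈ T, w i = x then 1 else 0 :=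
  card_filter _ _

lemma knap_insert {ι : Type*} [DecidableEq ι] {S : Finset ι} {a : ι} (ha : a ∉ S)
    (w : ι → ℕ) (x : ℕ) :
    knap (insert a S) w x = knap S w x + shiftF (knap S w) (w a) x := by
  rw [knap_eq_sum_ite, sum_powerset_insert ha, ← knap_eq_sum_ite]
  congr 1
  have hsum (T) (hT : T ∈ S.powerset) : ∑ i ∈ insert a T, w i = w a + ∑ i ∈ T, w i :=
    sum_insert fun haT => ha (mem_powerset.mp hT haT)
  rw [sum_congr rfl fun T hT => by rw [hsum T hT], shiftF]
  split_ifs with hax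
  · rw [knap_eq_sum_ite]
    exact sum_congr rfl fun T _ => if_congr (by omega) rfl rfl
  · exact sum_eq_zero fun T _ => if_neg (by omega)

theorem knap_insert_sum_approx_general {ι : Type*} [DecidableEq ι] (S : Finset ι)
    (w : ι → ℕ) (a : ι) (ha : a ∉ S) (α : ℝ) (F : ℕ → ℕ)
    (hF : IsSumApprox α F (knap S w)) :
    IsSumApprox α (fun x => F x + shiftF F (w a) x) (knap (insert a S) w) := by
  rw [show knap (insert a S) w = fun x => knap S w x + shiftF (knap S w) (w a) x from
    funext (knap_insert ha w)]
  exact hF.add (hF.shiftF (w a))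

theorem knap_insert_sum_approx {ι : Type*} [DecidableEq ι] (S : Finset ι)
    (w : ι → ℕ) (a : ι) (ha : a ∉ S) (α : ℝ) (hα : 0 < α) (F : ℕ → ℕ)
    (hF : IsSumApprox α F (knap S w)) :
    IsSumApprox α (fun x => F x + shiftF F (w a) x) (knap (insert a S) w) :=
  knap_insert_sum_approx_general S w a ha α F hF
end

section
/- Let ε ∈ (0, 1], let n be a positive integer with n·ε ≥ 1, let m be a natural number with 2^m ≤ √(n·ε), let c = √2/(√2 − 1), and for each i define δ_i = ε^{3/4} / (2c · 2^{i/2} · n^{1/4}). Then ∏_{i=0}^{m} (1 + δ_i)^{2^i} ≤ 1 + ε. -/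
/-!
Bounding each factor by `1 + δ ≤ exp δ` turns the product into `exp (∑ 2^i δ_i)`. Since
`2^i δ_i = √2^i · ε^{3/4} / (2 c n^{1/4})`, the exponent is a geometric sum in `√2`, which
is at most `c · √2^m` (this is where `c = √2 / (√2 - 1)` comes from), and
`√2^m ≤ (n ε)^{1/4}` by the hypothesis on `m`. The exponent is therefore at most `ε / 2`,
and `exp (ε / 2) ≤ 1 + ε` for `ε ≤ 1`.
-/

open Real Finset

lemma prod_one_add_pow_le_exp_sum {ι : Type*} (s : Finset ι) {x : ι → ℝ}
    (hx : ∀ i, 0 ≤ x i) (k : ι → ℕ) :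
    ∏ i ∈ s, (1 + x i) ^ k i ≤ exp (∑ i ∈ s, (k i : ℝ) * x i) := by
  rw [exp_sum]
  refine prod_le_prod (fun i _ ↦ pow_nonneg (by linarith [hx i]) _) fun i _ ↦ ?_
  rw [exp_nat_mul]
  exact pow_le_pow_left₀ (by linarith [hx i]) (by linarith [add_one_le_exp (x i)]) _

lemma geom_sum_range_succ_le {r : ℝ} (hr : 1 < r) (m : ℕ) :
    ∑ i ∈ range (m + 1), r ^ i ≤ r / (r - 1) * r ^ m := by
  rw [geom_sum_eq hr.ne', div_mul_eq_mul_div, ← pow_succ']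
  exact div_le_div_of_nonneg_right (by linarith) (by linarith)

lemma sqrt_sqrt_eq_rpow {x : ℝ} (hx : 0 ≤ x) : √(√x) = x ^ (1 / 4 : ℝ) := by
  rw [sqrt_eq_rpow, sqrt_eq_rpow, ← rpow_mul hx]
  norm_num

lemma sqrt_two_pow_le_rpow {x : ℝ} (hx : 0 ≤ x) {m : ℕ} (hm : (2 : ℝ) ^ m ≤ √x) :
    √2 ^ m ≤ x ^ (1 / 4 : ℝ) := by
  rw [← sqrt_sqrt_eq_rpow hx]
  refine le_sqrt_of_sq_le ?_
  rwa [← pow_mul, mul_comm, pow_mul, sq_sqrt zero_le_two]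

lemma exp_half_le_one_add {x : ℝ} (hx0 : 0 ≤ x) (hx1 : x ≤ 1) : exp (x / 2) ≤ 1 + x := by
  calc exp (x / 2) ≤ 1 / (1 - x / 2) :=
        exp_bound_div_one_sub_of_interval (by positivity) (by linarith)
    _ ≤ 1 + x := by
      rw [div_le_iff₀ (by linarith)]
      nlinarith

theorem delta_product_le_general (ε : ℝ) (hε : 0 < ε) (hε1 : ε ≤ 1)
    (n : ℕ) (hn : 0 < n)
    (m : ℕ) (hm : (2 : ℝ) ^ m ≤ Real.sqrt ((n : ℝ) * ε)) :
    ∏ i ∈ Finset.range (m + 1),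
      (1 + ε ^ (3 / 4 : ℝ) /
        (2 * (Real.sqrt 2 / (Real.sqrt 2 - 1)) * (Real.sqrt 2) ^ i *
          (n : ℝ) ^ (1 / 4 : ℝ))) ^ (2 ^ i) ≤ 1 + ε := by
  set c := √2 / (√2 - 1)
  set N := (n : ℝ) ^ (1 / 4 : ℝ)
  have hc : 0 < c := div_pos (by positivity) (sub_pos.mpr one_lt_sqrt_two)
  have hN : 0 < N := by positivity
  have hterm (i : ℕ) : ((2 ^ i : ℕ) : ℝ) * (ε ^ (3 / 4 : ℝ) / (2 * c * √2 ^ i * N)) =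
      √2 ^ i * (ε ^ (3 / 4 : ℝ) / (2 * c * N)) := by
    have h2 : (2 : ℝ) ^ i = √2 ^ i * √2 ^ i := by rw [← mul_pow, mul_self_sqrt zero_le_two]
    rw [Nat.cast_pow, Nat.cast_ofNat, h2]
    field_simp
  have hscale : (n * ε : ℝ) ^ (1 / 4 : ℝ) * ε ^ (3 / 4 : ℝ) = N * ε := by
    rw [mul_rpow (by positivity) hε.le, mul_assoc, ← rpow_add hε]
    norm_num [N]
  calc _ ≤ exp (∑ i ∈ range (m + 1),
          ((2 ^ i : ℕ) : ℝ) * (ε ^ (3 / 4 : ℝ) / (2 * c * √2 ^ i * N))) :=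
        prod_one_add_pow_le_exp_sum _ (fun i ↦ by positivity) _
    _ = exp ((∑ i ∈ range (m + 1), √2 ^ i) * (ε ^ (3 / 4 : ℝ) / (2 * c * N))) := by
        simp only [hterm, sum_mul]
    _ ≤ exp (c * (n * ε : ℝ) ^ (1 / 4 : ℝ) * (ε ^ (3 / 4 : ℝ) / (2 * c * N))) := by
        gcongr
        calc _ ≤ c * √2 ^ m := geom_sum_range_succ_le one_lt_sqrt_two m
          _ ≤ _ := by gcongr; exact sqrt_two_pow_le_rpow (by positivity) hm
    _ = exp (ε / 2) := by
        rw [mul_assoc, mul_div_assoc', hscale]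
        field_simp
    _ ≤ 1 + ε := exp_half_le_one_add hε.le hε1

theorem delta_product_le (ε : ℝ) (hε : 0 < ε) (hε1 : ε ≤ 1)
    (n : ℕ) (hn : 0 < n) (hnε : 1 ≤ (n : ℝ) * ε)
    (m : ℕ) (hm : (2 : ℝ) ^ m ≤ Real.sqrt ((n : ℝ) * ε)) :
    ∏ i ∈ Finset.range (m + 1),
      (1 + ε ^ (3 / 4 : ℝ) /
        (2 * (Real.sqrt 2 / (Real.sqrt 2 - 1)) * (Real.sqrt 2) ^ i *
          (n : ℝ) ^ (1 / 4 : ℝ))) ^ (2 ^ i) ≤ 1 + ε :=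
  delta_product_le_general ε hε hε1 n hn m hm
end
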